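/- If u solves u_t + (a(x)u)_x = 0 on the circle ℝ/2ℤ with a(x) = sin(πx)+2 and smooth initial data u₀, then the solution is time-periodic with period T = 2/√3: u(x, t + T) = u(x, t) for all x and t. -/

import Mathlib

open Real

lemma adv_alg (r s q co : ℝ) (hr : r^2 = 3) (hrpos : 0 < r)
    (hsc : s^2 + co^2 = 1) (hs : -1 ≤ s) (hq : q ≠ 0) :
    1/(s+2) = 1/r + 2/(q*r) * (1/(1+(co/(2+r+s))^2) * ((-s*q*(2+r+s) - co*(co*q))/(2+r+s)^2)) := by
  have hd : 0 < 2 + r + s := by linarith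
  have hs2 : 0 < s + 2 := by linarith
  have h2r : 0 < 2 + r := by linarith
  have h1 : -s*q*(2+r+s) - co*(co*q) = -(s*(2+r)+1)*q := by linear_combination (-q)*hsc
  have h2 : 1 + (co/(2+r+s))^2 = 2*(2+r)*(s+2)/(2+r+s)^2 := by
    rw [div_pow]
    rw [show (1:ℝ) + co^2/(2+r+s)^2 = ((2+r+s)^2 + co^2)/(2+r+s)^2 by field_simp]
    congr 1
    linear_combination hsc + hr
  rw [h1, h2, one_div_div]
  field_simp
  linear_combination hr

noncomputable def advG (x : ℝ) : ℝ :=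
  x / Real.sqrt 3 +
    (2 / (π * Real.sqrt 3)) * Real.arctan (Real.cos (π * x) / (2 + Real.sqrt 3 + Real.sin (π * x)))

lemma advPos (x : ℝ) : 0 < Real.sin (π * x) + 2 := by
  have h := Real.neg_one_le_sin (π * x); linarith

lemma advG_hasDeriv (x : ℝ) : HasDerivAt advG (1 / (Real.sin (π * x) + 2)) x := by
  have h3 : (0:ℝ) < Real.sqrt 3 := Real.sqrt_pos.mpr (by norm_num)
  have h1 : HasDerivAt (fun y : ℝ => π * y) π x := by
    simpa using (hasDerivAt_id x).const_mul π
  have hcos : HasDerivAt (fun y : ℝ => Real.cos (π * y)) (-Real.sin (π * x) * π) x :=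
    (Real.hasDerivAt_cos (π * x)).comp x h1
  have hden : HasDerivAt (fun y : ℝ => 2 + Real.sqrt 3 + Real.sin (π * y))
      (Real.cos (π * x) * π) x :=
    ((Real.hasDerivAt_sin (π * x)).comp x h1).const_add _
  have hdpos : 0 < 2 + Real.sqrt 3 + Real.sin (π * x) := by
    have := Real.neg_one_le_sin (π * x); linarith
  have hq := hcos.div hden (ne_of_gt hdpos)
  have harct := (Real.hasDerivAt_arctan _).comp x hq
  have hlin : HasDerivAt (fun y : ℝ => y / Real.sqrt 3) (1 / Real.sqrt 3) x := by
    simpa using (hasDerivAt_id x).div_const (Real.sqrt 3)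
  have htotal := hlin.add (harct.const_mul (2 / (π * Real.sqrt 3)))
  refine htotal.congr_deriv ?_
  exact (adv_alg (Real.sqrt 3) (Real.sin (π * x)) π (Real.cos (π * x))
    (Real.sq_sqrt (by norm_num)) h3 (Real.sin_sq_add_cos_sq _) (Real.neg_one_le_sin _)
    Real.pi_ne_zero).symm

lemma advG_strictMono : StrictMono advG := by
  refine strictMono_of_deriv_pos (fun x => ?_)
  rw [(advG_hasDeriv x).deriv]
  have := advPos x
  positivity

lemma advG_bounds (x : ℝ) : x / Real.sqrt 3 - 1 ≤ advG x ∧ advG x ≤ x / Real.sqrt 3 + 1 := by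
  have h3 : (0:ℝ) < Real.sqrt 3 := Real.sqrt_pos.mpr (by norm_num)
  have h31 : (1:ℝ) ≤ Real.sqrt 3 := by
    nlinarith [Real.sq_sqrt (show (0:ℝ) ≤ 3 by norm_num), Real.sqrt_nonneg 3]
  have hc : (0:ℝ) < 2 / (π * Real.sqrt 3) := by positivity
  set t := Real.cos (π * x) / (2 + Real.sqrt 3 + Real.sin (π * x))
  have h1 : Real.arctan t < π / 2 := Real.arctan_lt_pi_div_two t
  have h2 : -(π / 2) < Real.arctan t := Real.neg_pi_div_two_lt_arctan t
  have key : 2 / (π * Real.sqrt 3) * (π / 2) = 1 / Real.sqrt 3 := by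
    field_simp
  have hb1 : 2 / (π * Real.sqrt 3) * Real.arctan t ≤ 1 / Real.sqrt 3 := by
    rw [← key]; exact mul_le_mul_of_nonneg_left h1.le hc.le
  have hb2 : -(1 / Real.sqrt 3) ≤ 2 / (π * Real.sqrt 3) * Real.arctan t := by
    rw [← key]
    have := mul_le_mul_of_nonneg_left h2.le hc.le
    linarith [this]
  have hle1 : 1 / Real.sqrt 3 ≤ 1 := by
    rw [div_le_one h3]; exact h31
  unfold advG
  constructor <;> [linarith; linarith]

lemma advG_surj : Function.Surjective advG := by
  have h3 : (0:ℝ) < Real.sqrt 3 := Real.sqrt_pos.mpr (by norm_num)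
  have hcont : Continuous advG :=
    Differentiable.continuous (fun x => (advG_hasDeriv x).differentiableAt)
  refine Continuous.surjective hcont ?_ ?_
  · refine Filter.tendsto_atTop_mono (fun x => (advG_bounds x).1) ?_
    exact Filter.tendsto_atTop_add_const_right _ (-1)
      ((Filter.tendsto_id).atTop_div_const h3)
  · refine Filter.tendsto_atBot_mono (fun x => (advG_bounds x).2) ?_
    exact Filter.tendsto_atBot_add_const_right _ 1
      ((Filter.tendsto_id).atBot_div_const h3)

lemma advG_periodic (x : ℝ) : advG (x + 2) = advG x + 2 / Real.sqrt 3 := by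
  unfold advG
  rw [show π * (x + 2) = π * x + 2 * π by ring, Real.sin_add_two_pi, Real.cos_add_two_pi]
  ring

noncomputable def advIso : ℝ ≃o ℝ :=
  StrictMono.orderIsoOfSurjective advG advG_strictMono advG_surj

lemma advIso_apply (x : ℝ) : advIso x = advG x := by
  rfl

noncomputable def advInv : ℝ → ℝ := fun y => advIso.symm y

lemma advInv_advG (x : ℝ) : advInv (advG x) = x := by
  have : advG x = advIso x := rfl
  rw [advInv, this, OrderIso.symm_apply_apply]

lemma advG_advInv (y : ℝ) : advG (advInv y) = y := by
  have : advG (advInv y) = advIso (advInv y) := rfl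
  rw [this, advInv, OrderIso.apply_symm_apply]

lemma advInv_continuous : Continuous advInv :=
  advIso.symm.toHomeomorph.continuous

lemma advInv_hasDeriv (y : ℝ) :
    HasDerivAt advInv (Real.sin (π * advInv y) + 2) y := by
  have hpos := advPos (advInv y)
  have h := HasDerivAt.of_local_left_inverse
    (advInv_continuous.continuousAt)
    (advG_hasDeriv (advInv y))
    (by positivity)
    (Filter.Eventually.of_forall (fun z => advG_advInv z))
  simpa using h

theorem heterogeneous_advection_time_periodic
    (u : ℝ → ℝ → ℝ)
    (hsmooth : ContDiff ℝ (⊤ : ℕ∞) (fun p : ℝ × ℝ => u p.1 p.2))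
    (hperiodic : ∀ x t, u (x + 2) t = u x t)
    (hPDE : ∀ x t,
      deriv (fun s => u x s) t +
        deriv (fun y => (Real.sin (π * y) + 2) * u y t) x = 0) :
    ∀ x t, u x (t + 2 / Real.sqrt 3) = u x t := by
  intro x t
  set T : ℝ := 2 / Real.sqrt 3 with hT
  set V : ℝ × ℝ → ℝ := fun p => (Real.sin (π * p.1) + 2) * u p.1 p.2 with hV
  have hVsmooth : ContDiff ℝ (⊤ : ℕ∞) V := by
    apply ContDiff.mul
    · exact ((Real.contDiff_sin.comp ((contDiff_const).mul contDiff_fst)).add contDiff_const)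
    · exact hsmooth
  have hVdiff : Differentiable ℝ V := hVsmooth.differentiable (by simp)
  set Φ : ℝ → ℝ := fun s => advInv (advG x + s) with hΦ
  have hΦ0 : Φ 0 = x := by simp [hΦ, advInv_advG]
  have hΦT : Φ T = x + 2 := by
    have : advG x + T = advG (x + 2) := by rw [advG_periodic]
    simp [hΦ, this, advInv_advG]
  have hΦd : ∀ s, HasDerivAt Φ (Real.sin (π * Φ s) + 2) s := by
    intro s
    have hinner : HasDerivAt (fun s : ℝ => advG x + s) 1 s := by
      simpa using (hasDerivAt_id s).const_add (advG x)
    have := (advInv_hasDeriv (advG x + s)).comp s hinner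
    simpa [hΦ, Function.comp_def] using this
  set g : ℝ → ℝ := fun s => V (Φ s, t + s) with hg
  have hgderiv : ∀ s, HasDerivAt g 0 s := by
    intro s
    set p : ℝ × ℝ := (Φ s, t + s) with hp
    set a : ℝ := Real.sin (π * Φ s) + 2 with ha
    have hpath : HasDerivAt (fun s : ℝ => ((Φ s, t + s) : ℝ × ℝ)) ((a, 1) : ℝ × ℝ) s :=
      (hΦd s).prodMk (by simpa using (hasDerivAt_id s).const_add t)
    have hfd : HasFDerivAt V (fderiv ℝ V p) p := (hVdiff p).hasFDerivAt
    have hgd : HasDerivAt g (fderiv ℝ V p ((a, 1) : ℝ × ℝ)) s :=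
      by have := hfd.comp_hasDerivAt s hpath; exact this
    -- partial derivatives
    have hxpart : HasDerivAt (fun y => V (y, p.2)) (fderiv ℝ V p ((1, 0) : ℝ × ℝ)) p.1 :=
      by have := hfd.comp_hasDerivAt p.1 ((hasDerivAt_id p.1).prodMk (hasDerivAt_const p.1 p.2)); exact this
    have htpart : HasDerivAt (fun τ => V (p.1, τ)) (fderiv ℝ V p ((0, 1) : ℝ × ℝ)) p.2 :=
      hfd.comp_hasDerivAt p.2 ((hasDerivAt_const p.2 p.1).prodMk (hasDerivAt_id p.2))
    -- u differentiable in t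
    have hut : DifferentiableAt ℝ (fun τ => u p.1 τ) p.2 := by
      exact (((hsmooth.differentiable (by simp)).comp
        ((differentiable_const p.1).prodMk differentiable_id)) p.2)
    -- identify t-partial
    have htval : fderiv ℝ V p ((0, 1) : ℝ × ℝ)
        = (Real.sin (π * p.1) + 2) * deriv (fun τ => u p.1 τ) p.2 := by
      have h1 : deriv (fun τ => V (p.1, τ)) p.2 = fderiv ℝ V p ((0, 1) : ℝ × ℝ) :=
        htpart.deriv
      have h2 : (fun τ => V (p.1, τ)) = fun τ => (Real.sin (π * p.1) + 2) * u p.1 τ := rfl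
      rw [← h1, h2, deriv_const_mul _ hut]
    have hxval : fderiv ℝ V p ((1, 0) : ℝ × ℝ)
        = deriv (fun y => (Real.sin (π * y) + 2) * u y p.2) p.1 := by
      have h1 : deriv (fun y => V (y, p.2)) p.1 = fderiv ℝ V p ((1, 0) : ℝ × ℝ) :=
        hxpart.deriv
      rw [← h1]
    have hsplit : ((a, 1) : ℝ × ℝ) = a • ((1, 0) : ℝ × ℝ) + ((0, 1) : ℝ × ℝ) := by
      simp [Prod.ext_iff]
    have hlin : fderiv ℝ V p ((a, 1) : ℝ × ℝ)
        = a * fderiv ℝ V p ((1, 0) : ℝ × ℝ) + fderiv ℝ V p ((0, 1) : ℝ × ℝ) := by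
      rw [hsplit, map_add, map_smul]
      simp
    have hpde := hPDE p.1 p.2
    have hap : a = Real.sin (π * p.1) + 2 := by rw [ha, hp]
    have : fderiv ℝ V p ((a, 1) : ℝ × ℝ) = 0 := by
      rw [hlin, hxval, htval, hap]
      linear_combination (Real.sin (π * p.1) + 2) * hpde
    rw [this] at hgd
    exact hgd
  have hconst : g T = g 0 :=
    is_const_of_deriv_eq_zero (fun s => (hgderiv s).differentiableAt)
      (fun s => (hgderiv s).deriv) T 0
  have hg0 : g 0 = (Real.sin (π * x) + 2) * u x t := by
    simp [hg, hV, hΦ0]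
  have hgT : g T = (Real.sin (π * x) + 2) * u x (t + T) := by
    have h1 : g T = (Real.sin (π * (x + 2)) + 2) * u (x + 2) (t + T) := by
      simp [hg, hV, hΦT]
    rw [h1, show π * (x + 2) = π * x + 2 * π by ring, Real.sin_add_two_pi,
      hperiodic]
  have hfinal : (Real.sin (π * x) + 2) * u x (t + T) = (Real.sin (π * x) + 2) * u x t := by
    rw [← hgT, ← hg0, hconst]
  exact mul_left_cancel₀ (ne_of_gt (advPos x)) hfinal
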